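/- arXiv:1601.00681 — 2 statements merged into one kernel-verified Lean document; each statement's English description precedes it below -/
import Mathlib

section
/- Let s > 0 and define u : (r_r, ∞) → ℝ by u(r) = (1/(8π r_0 √(Ds))) · [exp(−|r − r_0|·√(s/D)) + exp(−(r + r_0 − 2r_r)·√(s/D))] − (2β(s)/(β(s) + √(s/D))) · exp(−(r + r_0 − 2r_r)·√(s/D)) / (8π r_0 √(Ds)). Then for every r > r_r with r ≠ r_0, u is twice differentiable at r and D·u″(r) = s·u(r). -/
open Filter

private lemma expLin_hasDerivAt (c a b x : ℝ) :
    HasDerivAt (fun ρ : ℝ => c * Real.exp (a * ρ + b)) (c * a * Real.exp (a * x + b)) x := by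
  have h : HasDerivAt (fun ρ : ℝ => a * ρ + b) a x := by
    simpa using ((hasDerivAt_id x).const_mul a).add_const b
  simpa [mul_comm, mul_left_comm, mul_assoc] using h.exp.const_mul c

private lemma two_hasDerivAt (c1 a1 b1 c2 a2 b2 x : ℝ) :
    HasDerivAt (fun ρ : ℝ => c1 * Real.exp (a1 * ρ + b1) + c2 * Real.exp (a2 * ρ + b2))
      (c1 * a1 * Real.exp (a1 * x + b1) + c2 * a2 * Real.exp (a2 * x + b2)) x :=
  (expLin_hasDerivAt c1 a1 b1 x).add (expLin_hasDerivAt c2 a2 b2 x)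

private lemma key (D s : ℝ) (hD : D ≠ 0) (f : ℝ → ℝ) (r c1 a1 b1 c2 a2 b2 : ℝ)
    (h1 : a1 ^ 2 = s / D) (h2 : a2 ^ 2 = s / D)
    (heq : f =ᶠ[nhds r]
      fun ρ : ℝ => c1 * Real.exp (a1 * ρ + b1) + c2 * Real.exp (a2 * ρ + b2)) :
    DifferentiableAt ℝ f r ∧ DifferentiableAt ℝ (deriv f) r ∧
      D * deriv (deriv f) r = s * f r := by
  set g := fun ρ : ℝ => c1 * Real.exp (a1 * ρ + b1) + c2 * Real.exp (a2 * ρ + b2) with hgdef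
  have hdg : deriv g = fun x : ℝ =>
      (c1 * a1) * Real.exp (a1 * x + b1) + (c2 * a2) * Real.exp (a2 * x + b2) := by
    funext x
    simpa [mul_assoc] using (two_hasDerivAt c1 a1 b1 c2 a2 b2 x).deriv
  have hg2 : ∀ x : ℝ, HasDerivAt (deriv g)
      ((c1 * a1) * a1 * Real.exp (a1 * x + b1) + (c2 * a2) * a2 * Real.exp (a2 * x + b2)) x := by
    intro x
    rw [hdg]
    exact two_hasDerivAt (c1 * a1) a1 b1 (c2 * a2) a2 b2 x
  have hd : deriv f =ᶠ[nhds r] deriv g := heq.deriv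
  refine ⟨heq.differentiableAt_iff.mpr (two_hasDerivAt c1 a1 b1 c2 a2 b2 r).differentiableAt,
    hd.differentiableAt_iff.mpr (hg2 r).differentiableAt, ?_⟩
  have h3 : deriv (deriv f) r = deriv (deriv g) r := hd.deriv.eq_of_nhds
  have h4 : deriv (deriv g) r =
      (c1 * a1) * a1 * Real.exp (a1 * r + b1) + (c2 * a2) * a2 * Real.exp (a2 * r + b2) :=
    (hg2 r).deriv
  have h5 : f r = g r := heq.eq_of_nhds
  have ha1 : D * (a1 * a1) = s := by rw [← sq, h1]; field_simp
  have ha2 : D * (a2 * a2) = s := by rw [← sq, h2]; field_simp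
  rw [h3, h4, h5, hgdef]
  linear_combination (c1 * Real.exp (a1 * r + b1)) * ha1 + (c2 * Real.exp (a2 * r + b2)) * ha2

/-- The Laplace transform `u(r) = r·C̃(r,s|r₀)` of the radial molecule distribution
satisfies the Laplace-transformed Fick equation `D u″(r) = s u(r)` for every
`r > r_r` with `r ≠ r₀`, and is twice differentiable there. -/
theorem laplace_solution_solves_ode (D rr r0 k1 km1 s : ℝ)
    (hD : 0 < D) (hrr : 0 < rr) (hr0 : rr < r0) (hk1 : 0 ≤ k1) (hkm1 : 0 ≤ km1)
    (hs : 0 < s) :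
    ∀ r : ℝ, rr < r → r ≠ r0 →
      (DifferentiableAt ℝ (fun ρ : ℝ =>
          (1 / (8 * Real.pi * r0 * Real.sqrt (D * s))) *
              (Real.exp (-|ρ - r0| * Real.sqrt (s / D)) +
                Real.exp (-(ρ + r0 - 2 * rr) * Real.sqrt (s / D))) -
            (2 * (1 / rr + k1 * s / (D * (s + km1))) /
                ((1 / rr + k1 * s / (D * (s + km1))) + Real.sqrt (s / D))) *
              Real.exp (-(ρ + r0 - 2 * rr) * Real.sqrt (s / D)) /
              (8 * Real.pi * r0 * Real.sqrt (D * s))) r) ∧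
      (DifferentiableAt ℝ (deriv (fun ρ : ℝ =>
          (1 / (8 * Real.pi * r0 * Real.sqrt (D * s))) *
              (Real.exp (-|ρ - r0| * Real.sqrt (s / D)) +
                Real.exp (-(ρ + r0 - 2 * rr) * Real.sqrt (s / D))) -
            (2 * (1 / rr + k1 * s / (D * (s + km1))) /
                ((1 / rr + k1 * s / (D * (s + km1))) + Real.sqrt (s / D))) *
              Real.exp (-(ρ + r0 - 2 * rr) * Real.sqrt (s / D)) /
              (8 * Real.pi * r0 * Real.sqrt (D * s)))) r) ∧
      D * deriv (deriv (fun ρ : ℝ =>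
          (1 / (8 * Real.pi * r0 * Real.sqrt (D * s))) *
              (Real.exp (-|ρ - r0| * Real.sqrt (s / D)) +
                Real.exp (-(ρ + r0 - 2 * rr) * Real.sqrt (s / D))) -
            (2 * (1 / rr + k1 * s / (D * (s + km1))) /
                ((1 / rr + k1 * s / (D * (s + km1))) + Real.sqrt (s / D))) *
              Real.exp (-(ρ + r0 - 2 * rr) * Real.sqrt (s / D)) /
              (8 * Real.pi * r0 * Real.sqrt (D * s)))) r
        = s * ((1 / (8 * Real.pi * r0 * Real.sqrt (D * s))) *
              (Real.exp (-|r - r0| * Real.sqrt (s / D)) +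
                Real.exp (-(r + r0 - 2 * rr) * Real.sqrt (s / D))) -
            (2 * (1 / rr + k1 * s / (D * (s + km1))) /
                ((1 / rr + k1 * s / (D * (s + km1))) + Real.sqrt (s / D))) *
              Real.exp (-(r + r0 - 2 * rr) * Real.sqrt (s / D)) /
              (8 * Real.pi * r0 * Real.sqrt (D * s))) := by
  intro r hr hne
  set α := Real.sqrt (s / D) with hαdef
  have hα2 : α ^ 2 = s / D := Real.sq_sqrt (by positivity)
  set A := 1 / (8 * Real.pi * r0 * Real.sqrt (D * s)) with hAdef
  set B := 2 * (1 / rr + k1 * s / (D * (s + km1))) /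
      ((1 / rr + k1 * s / (D * (s + km1))) + α) with hBdef
  rcases lt_or_gt_of_ne hne with hlt | hgt
  · -- r < r0 : |ρ - r0| = -(ρ - r0) near r
    refine key D s hD.ne' _ r A α (-(α * r0)) (A - B * A) (-α) (α * (2 * rr - r0)) hα2
      (by rw [neg_pow]; simp [hα2]) ?_
    filter_upwards [Iio_mem_nhds hlt] with ρ hρ
    rw [abs_of_neg (sub_neg.mpr hρ)]
    rw [show -(-(ρ - r0)) * α = α * ρ + -(α * r0) from by ring,
      show -(ρ + r0 - 2 * rr) * α = -α * ρ + α * (2 * rr - r0) from by ring]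
    ring
  · -- r > r0 : |ρ - r0| = ρ - r0 near r
    refine key D s hD.ne' _ r A (-α) (α * r0) (A - B * A) (-α) (α * (2 * rr - r0))
      (by rw [neg_pow]; simp [hα2]) (by rw [neg_pow]; simp [hα2]) ?_
    filter_upwards [Ioi_mem_nhds hgt] with ρ hρ
    rw [abs_of_pos (sub_pos.mpr hρ)]
    rw [show -(ρ - r0) * α = -α * ρ + α * r0 from by ring,
      show -(ρ + r0 - 2 * rr) * α = -α * ρ + α * (2 * rr - r0) from by ring]
    ring
end

section
/- Let s > 0 and define u : (0, ∞) → ℝ by u(r) = (1/(8π r_0 √(Ds))) · [exp(−|r − r_0|·√(s/D)) + exp(−(r + r_0 − 2r_r)·√(s/D))] − (2β(s)/(β(s) + √(s/D))) · exp(−(r + r_0 − 2r_r)·√(s/D)) / (8π r_0 √(Ds)). Then u is differentiable at r = r_r and satisfies the Laplace-transformed Robin boundary condition u′(r_r) = (1 + r_r·k_1·s/(D·(s + k_{−1}))) · u(r_r)/r_r. -/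
/-!
Near the receiver (`r < r₀`) the absolute value in `u` resolves, and `u` is the free-space
term `c·e^{q(r - r₀)}` plus an image source mirrored at `r_r`, `c·ρ·e^{q(2r_r - r₀ - r)}`,
with `q = √(s/D)` and reflection coefficient `ρ = 1 - 2β/(β + q) = (q - β)/(q + β)`.
At `r = r_r` both exponentials equal `E = e^{q(r_r - r₀)}`, so `u(r_r) = c(1 + ρ)E` and `u'(r_r) = cq(1 - ρ)E`,
and this choice of `ρ` is exactly the one making `q(1 - ρ) = β(1 + ρ)`, i.e. `u' = β u`.
Finally `β = (1 + r_r k₁ s/(D(s + k₋₁)))/r_r`.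
-/

noncomputable def uLaplace (D rr r0 k1 km1 s : ℝ) (r : ℝ) : ℝ :=
  (1 / (8 * Real.pi * r0 * Real.sqrt (D * s))) *
      (Real.exp (-|r - r0| * Real.sqrt (s / D)) +
        Real.exp (-(r + r0 - 2 * rr) * Real.sqrt (s / D))) -
    (2 * (1 / rr + k1 * s / (D * (s + km1))) /
        ((1 / rr + k1 * s / (D * (s + km1))) + Real.sqrt (s / D))) *
      Real.exp (-(r + r0 - 2 * rr) * Real.sqrt (s / D)) /
      (8 * Real.pi * r0 * Real.sqrt (D * s))

open Real Filter Topology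

noncomputable section

def robinCoeff (D rr k1 km1 s : ℝ) : ℝ := 1 / rr + k1 * s / (D * (s + km1))

def reflectionCoeff (β q : ℝ) : ℝ := (q - β) / (q + β)

def sourceWithImage (c ρ q R r0 r : ℝ) : ℝ :=
  c * (exp (q * (r - r0)) + ρ * exp (q * (2 * R - r0 - r)))

end

section SourceWithImage

variable (c ρ q R r0 : ℝ)

theorem sourceWithImage_boundary :
    sourceWithImage c ρ q R r0 R = c * (1 + ρ) * exp (q * (R - r0)) := by
  rw [sourceWithImage, show 2 * R - r0 - R = R - r0 by ring]
  ring

theorem hasDerivAt_sourceWithImage_boundary :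
    HasDerivAt (sourceWithImage c ρ q R r0) (c * q * (1 - ρ) * exp (q * (R - r0))) R := by
  have hsource : HasDerivAt (fun r => q * (r - r0)) q R := by
    simpa using ((hasDerivAt_id R).sub_const r0).const_mul q
  have himage : HasDerivAt (fun r => q * (2 * R - r0 - r)) (-q) R := by
    simpa using ((hasDerivAt_id R).const_sub (2 * R - r0)).const_mul q
  refine ((hsource.exp.add (himage.exp.const_mul ρ)).const_mul c).congr_deriv ?_
  rw [show 2 * R - r0 - R = R - r0 by ring]
  ring

theorem hasDerivAt_sourceWithImage_reflectionCoeff {β : ℝ} (hβq : q + β ≠ 0) :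
    HasDerivAt (sourceWithImage c (reflectionCoeff β q) q R r0)
      (β * sourceWithImage c (reflectionCoeff β q) q R r0 R) R := by
  convert hasDerivAt_sourceWithImage_boundary c (reflectionCoeff β q) q R r0 using 1
  rw [sourceWithImage_boundary, reflectionCoeff]
  field_simp
  ring

end SourceWithImage

theorem uLaplace_eq_sourceWithImage {D rr r0 k1 km1 s r : ℝ}
    (hβq : √(s / D) + robinCoeff D rr k1 km1 s ≠ 0) (hr : r < r0) :
    uLaplace D rr r0 k1 km1 s r =
      sourceWithImage (1 / (8 * π * r0 * √(D * s)))
        (reflectionCoeff (robinCoeff D rr k1 km1 s) √(s / D)) √(s / D) rr r0 r := by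
  rw [uLaplace, sourceWithImage, reflectionCoeff, ← robinCoeff, abs_of_neg (sub_neg.mpr hr),
    show -(-(r - r0)) * √(s / D) = √(s / D) * (r - r0) by ring,
    show -(r + r0 - 2 * rr) * √(s / D) = √(s / D) * (2 * rr - r0 - r) by ring]
  set β := robinCoeff D rr k1 km1 s
  set q := √(s / D)
  have hB : 2 * β / (β + q) = 1 - (q - β) / (q + β) := by
    rw [add_comm β q]
    field_simp
    ring
  rw [hB]
  ring

theorem robinCoeff_mul_div {D rr k1 km1 s : ℝ} (hrr : rr ≠ 0) (x : ℝ) :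
    (1 + rr * k1 * s / (D * (s + km1))) * x / rr = robinCoeff D rr k1 km1 s * x := by
  rw [robinCoeff]
  field_simp

/-- The Laplace transform `u(r) = r·C̃(r,s|r₀)` of the radial molecule distribution is
differentiable at `r = r_r` and satisfies the Laplace-transformed Robin boundary
condition `u′(r_r) = (1 + r_r k₁ s/(D(s+k₋₁))) u(r_r)/r_r`. -/
theorem laplace_solution_satisfies_robin (D rr r0 k1 km1 s : ℝ)
    (hD : 0 < D) (hrr : 0 < rr) (hr0 : rr < r0) (hk1 : 0 ≤ k1) (hkm1 : 0 ≤ km1)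
    (hs : 0 < s) :
    DifferentiableAt ℝ (uLaplace D rr r0 k1 km1 s) rr ∧
      deriv (uLaplace D rr r0 k1 km1 s) rr
        = (1 + rr * k1 * s / (D * (s + km1))) * uLaplace D rr r0 k1 km1 s rr / rr := by
  have hβq : √(s / D) + robinCoeff D rr k1 km1 s ≠ 0 := by
    have : 0 < robinCoeff D rr k1 km1 s := by rw [robinCoeff]; positivity
    positivity
  have hu : uLaplace D rr r0 k1 km1 s =ᶠ[𝓝 rr] sourceWithImage (1 / (8 * π * r0 * √(D * s)))
      (reflectionCoeff (robinCoeff D rr k1 km1 s) √(s / D)) √(s / D) rr r0 :=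
    eventually_lt_nhds hr0 |>.mono fun r hr => uLaplace_eq_sourceWithImage hβq hr
  have hderiv := (hasDerivAt_sourceWithImage_reflectionCoeff _ _ _ _ hβq).congr_of_eventuallyEq hu
  refine ⟨hderiv.differentiableAt, ?_⟩
  rw [hderiv.deriv, hu.eq_of_nhds, robinCoeff_mul_div hrr.ne']
end
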